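/- Let g be a 6-dimensional real Lie algebra such that ker d ∩ g* has dimension at least 4 (equivalently, the derived algebra [g,g] has dimension at most 2). Then g admits no maximally non-integrable almost complex structure, i.e. no almost complex structure J with rk N_J = 3. -/

import Mathlib

open Matrix

noncomputable section

/-- Complexification of a real matrix. -/
def cplx {n : ℕ} (A : Matrix (Fin n) (Fin n) ℝ) : Matrix (Fin n) (Fin n) ℂ :=
  A.map Complex.ofReal

/-- The projector `(1/2)(Id + iJ)` of `V ⊗ ℂ` onto the `-i`-eigenspace `V^{0,1}` of the
complexified almost complex structure `J`. -/
def P01 {n : ℕ} (J : Matrix (Fin n) (Fin n) ℝ) : Matrix (Fin n) (Fin n) ℂ :=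
  (2⁻¹ : ℂ) • (1 + Complex.I • cplx J)

/-- The `(0,2)`-part of a complex 2-form `ω` (written as an antisymmetric matrix in the
real basis) with respect to the bigrading induced by `J`: `ω^{0,2}(x,y) = ω(P01 x, P01 y)`. -/
def proj02 {n : ℕ} (J : Matrix (Fin n) (Fin n) ℝ) (ω : Matrix (Fin n) (Fin n) ℂ) :
    Matrix (Fin n) (Fin n) ℂ :=
  (P01 J)ᵀ * ω * P01 J

/-- The Chevalley–Eilenberg differential on complex 1-forms, determined by its values
`Dd r = d e^r` on the dual basis: `d(Σ α_r e^r) = Σ α_r · (d e^r)`. -/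
def dC {n : ℕ} (Dd : Fin n → Matrix (Fin n) (Fin n) ℝ) (α : Fin n → ℂ) :
    Matrix (Fin n) (Fin n) ℂ :=
  ∑ r, α r • cplx (Dd r)

/-- The Chevalley–Eilenberg differential on real 1-forms, as a linear map. -/
def dR {n : ℕ} (Dd : Fin n → Matrix (Fin n) (Fin n) ℝ) :
    (Fin n → ℝ) →ₗ[ℝ] Matrix (Fin n) (Fin n) ℝ :=
  ∑ r, (LinearMap.proj r : (Fin n → ℝ) →ₗ[ℝ] ℝ).smulRight (Dd r)

/-- The rank of the Nijenhuis tensor of the almost complex structure `J`: the complex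
dimension of the image of `μ̄ = π^{0,2} ∘ d` on `(1,0)`-forms.  A complex covector `α` is
of type `(1,0)` iff it annihilates `V^{0,1}`, i.e. `α ∘ P01 = 0`. -/
def nijRank {n : ℕ} (Dd : Fin n → Matrix (Fin n) (Fin n) ℝ)
    (J : Matrix (Fin n) (Fin n) ℝ) : ℕ :=
  Module.finrank ℂ (Submodule.span ℂ
    {ω : Matrix (Fin n) (Fin n) ℂ |
      ∃ α : Fin n → ℂ, Matrix.vecMul α (P01 J) = 0 ∧ ω = proj02 J (dC Dd α)})

/-- The 2-form `e^a ∧ e^b`, as an antisymmetric matrix. -/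
def wR (a b : Fin 6) : Matrix (Fin 6) (Fin 6) ℝ :=
  fun p q => (if p = a ∧ q = b then 1 else 0) - (if p = b ∧ q = a then 1 else 0)

/-- The wedge product of two complex covectors, as an antisymmetric matrix. -/
def wedgeC {n : ℕ} (α β : Fin n → ℂ) : Matrix (Fin n) (Fin n) ℂ :=
  fun p q => α p * β q - α q * β p

/-! The `(0,2)`-part of `dα` depends only on `dα`, so `rk N_J` is at most the rank of `d` on
complex 1-forms, which is `6 - dim_ℂ ker d`. A real basis of the closed real 1-forms stays
`ℂ`-linearly independent, so `dim_ℂ ker d ≥ 4` and `rk N_J ≤ 2`. -/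

section

variable {n : ℕ}

def dCLinear (Dd : Fin n → Matrix (Fin n) (Fin n) ℝ) :
    (Fin n → ℂ) →ₗ[ℂ] Matrix (Fin n) (Fin n) ℂ where
  toFun := dC Dd
  map_add' α β := by simp [dC, add_smul, Finset.sum_add_distrib]
  map_smul' c α := by simp [dC, mul_smul, Finset.smul_sum]

def proj02Linear (J : Matrix (Fin n) (Fin n) ℝ) :
    Matrix (Fin n) (Fin n) ℂ →ₗ[ℂ] Matrix (Fin n) (Fin n) ℂ :=
  LinearMap.mulRight ℂ (P01 J) ∘ₗ LinearMap.mulLeft ℂ (P01 J)ᵀ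

lemma dC_algebraMap_comp (Dd : Fin n → Matrix (Fin n) (Fin n) ℝ) (v : Fin n → ℝ) :
    dC Dd (algebraMap ℝ ℂ ∘ v) = cplx (dR Dd v) := by
  ext p q
  simp [dC, dR, cplx, Matrix.sum_apply]

lemma finrank_ker_dR_le (Dd : Fin n → Matrix (Fin n) (Fin n) ℝ) :
    Module.finrank ℝ (LinearMap.ker (dR Dd)) ≤ Module.finrank ℂ (LinearMap.ker (dCLinear Dd)) := by
  set b := Module.finBasis ℝ (LinearMap.ker (dR Dd))
  have hli : LinearIndependent ℂ (fun k => algebraMap ℝ ℂ ∘ (b k : Fin n → ℝ)) :=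
    linearIndependent_algebraMap_comp_iff.mpr <|
      b.linearIndependent.map' (LinearMap.ker (dR Dd)).subtype (Submodule.ker_subtype _)
  have hmem : ∀ k, algebraMap ℝ ℂ ∘ (b k : Fin n → ℝ) ∈ LinearMap.ker (dCLinear Dd) := fun k => by
    change dC Dd _ = 0
    rw [dC_algebraMap_comp, LinearMap.mem_ker.mp (b k).2]
    exact Matrix.map_zero _ Complex.ofReal_zero
  have hv : LinearIndependent ℂ (fun k => (⟨_, hmem k⟩ : LinearMap.ker (dCLinear Dd))) :=
    LinearIndependent.of_comp (LinearMap.ker (dCLinear Dd)).subtype hli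
  simpa using hv.fintype_card_le_finrank

lemma nijRank_le_finrank_range_dCLinear (Dd : Fin n → Matrix (Fin n) (Fin n) ℝ)
    (J : Matrix (Fin n) (Fin n) ℝ) :
    nijRank Dd J ≤ Module.finrank ℂ (LinearMap.range (dCLinear Dd)) := by
  refine (Submodule.finrank_mono ?_).trans (Submodule.finrank_map_le (proj02Linear J) _)
  rw [Submodule.span_le]
  rintro _ ⟨α, -, rfl⟩
  exact ⟨dC Dd α, ⟨α, rfl⟩, by simp [proj02Linear, proj02, Matrix.mul_assoc]⟩

lemma nijRank_add_finrank_ker_dR_le (Dd : Fin n → Matrix (Fin n) (Fin n) ℝ)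
    (J : Matrix (Fin n) (Fin n) ℝ) :
    nijRank Dd J + Module.finrank ℝ (LinearMap.ker (dR Dd)) ≤ n := by
  have hrank := LinearMap.finrank_range_add_finrank_ker (dCLinear Dd)
  rw [Module.finrank_fin_fun] at hrank
  have := nijRank_le_finrank_range_dCLinear Dd J
  have := finrank_ker_dR_le Dd
  omega

end

theorem no_maximally_non_integrable_of_four_closed_general (Dd : Fin 6 → Matrix (Fin 6) (Fin 6) ℝ)
    (hker : 4 ≤ Module.finrank ℝ (LinearMap.ker (dR Dd))) :
    ¬ ∃ J : Matrix (Fin 6) (Fin 6) ℝ, J * J = -1 ∧ nijRank Dd J = 3 := by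
  rintro ⟨J, -, hJ⟩
  have := nijRank_add_finrank_ker_dR_le Dd J
  omega

/-- Let `g` be a `6`-dimensional real Lie algebra such that `ker d ∩ g*` has dimension
at least `4`.  Then `g` admits no maximally non-integrable almost complex structure,
i.e. no almost complex structure `J` with `rk N_J = 3`. -/
theorem no_maximally_non_integrable_of_four_closed (Dd : Fin 6 → Matrix (Fin 6) (Fin 6) ℝ)
    (hanti : ∀ r, (Dd r)ᵀ = -(Dd r))
    (hJacobi : ∀ p q r s, ∑ t, ((Dd t) p q * (Dd s) t r + (Dd t) q r * (Dd s) t p +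
      (Dd t) r p * (Dd s) t q) = 0)
    (hker : 4 ≤ Module.finrank ℝ (LinearMap.ker (dR Dd))) :
    ¬ ∃ J : Matrix (Fin 6) (Fin 6) ℝ, J * J = -1 ∧ nijRank Dd J = 3 :=
  no_maximally_non_integrable_of_four_closed_general Dd hker
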